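/- Let X be a real-valued random variable on a probability space and let g : ℝ → ℝ be a continuous monotone nondecreasing function; set Y := g(X) (so X and Y are comonotone). Then for every t ∈ (0,1), F_{X+Y}⁻¹(t) = F_X⁻¹(t) + F_Y⁻¹(t); that is, quantiles are additive for comonotone random variables and the pooling effect is zero. -/

import Mathlib

open MeasureTheory ProbabilityTheory Set Filter Topology

/-- The quantile function of a distribution on `ℝ`: `F⁻¹(t) = inf {x | t ≤ F(x)}`. -/
noncomputable def quantile (μ : Measure ℝ) (t : ℝ) : ℝ :=
  sInf {x : ℝ | t ≤ cdf μ x}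

/-!
Both sides are values of the map `g ↦ quantile of g(X)` at the continuous nondecreasing maps
`x ↦ x + g x` and `g`, so it suffices to show `F_{g(X)}⁻¹(t) = g (F_X⁻¹(t))`. This follows from the
Galois connection `F⁻¹(t) ≤ x ↔ t ≤ F(x)`: on the one hand `{X ≤ q} ⊆ {g X ≤ g q}`; on the other,
if `y < g q` then by continuity `y < g s` for some `s < q`, so `{g X ≤ y} ⊆ {X ≤ s}` has probability
below `t`.
-/

section Quantile

variable (μ : Measure ℝ) {t : ℝ}

lemma bddBelow_setOf_le_cdf (ht : 0 < t) : BddBelow {x : ℝ | t ≤ cdf μ x} := by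
  obtain ⟨x₀, hx₀⟩ := ((tendsto_cdf_atBot μ).eventually (eventually_lt_nhds ht)).exists
  refine ⟨x₀, fun x hx => ?_⟩
  by_contra! hlt
  exact ((monotone_cdf μ hlt.le).trans_lt hx₀).not_ge hx

lemma nonempty_setOf_le_cdf (ht : t < 1) : {x : ℝ | t ≤ cdf μ x}.Nonempty :=
  ((tendsto_cdf_atTop μ).eventually (eventually_ge_nhds ht)).exists

lemma quantile_le_iff (ht : t ∈ Ioo 0 1) {x : ℝ} : quantile μ t ≤ x ↔ t ≤ cdf μ x := by
  refine ⟨fun hx => ?_, fun hx => csInf_le (bddBelow_setOf_le_cdf μ ht.1) hx⟩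
  -- `t ≤ cdf μ x'` for every `x' > x`, and `cdf μ` is right-continuous at `x`.
  refine ge_of_tendsto ((cdf μ).right_continuous x |>.mono_left
    (nhdsWithin_mono x Ioi_subset_Ici_self)) ?_
  filter_upwards [self_mem_nhdsWithin] with x' hx'
  obtain ⟨s, hs, hsx'⟩ := exists_lt_of_csInf_lt (nonempty_setOf_le_cdf μ ht.2) (hx.trans_lt hx')
  exact hs.trans (monotone_cdf μ hsx'.le)

lemma le_cdf_quantile (ht : t ∈ Ioo 0 1) : t ≤ cdf μ (quantile μ t) :=
  (quantile_le_iff μ ht).1 le_rfl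

end Quantile

lemma cdf_map_eq_measureReal_preimage (μ : Measure ℝ) [IsProbabilityMeasure μ] {g : ℝ → ℝ}
    (hg : Measurable g) (y : ℝ) : cdf (μ.map g) y = μ.real (g ⁻¹' Iic y) := by
  have := Measure.isProbabilityMeasure_map (μ := μ) hg.aemeasurable
  rw [cdf_eq_real, map_measureReal_apply hg measurableSet_Iic]

lemma quantile_map_of_monotone (μ : Measure ℝ) [IsProbabilityMeasure μ] {g : ℝ → ℝ}
    (hgc : Continuous g) (hgm : Monotone g) {t : ℝ} (ht : t ∈ Ioo 0 1) :
    quantile (μ.map g) t = g (quantile μ t) := by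
  set q := quantile μ t
  have hcdf := cdf_map_eq_measureReal_preimage μ hgc.measurable
  apply le_antisymm
  · rw [quantile_le_iff _ ht, hcdf]
    calc t ≤ cdf μ q := le_cdf_quantile μ ht
      _ = μ.real (Iic q) := cdf_eq_real μ q
      _ ≤ μ.real (g ⁻¹' Iic (g q)) := measureReal_mono fun x hx => hgm hx
  · by_contra! hlt
    set y := quantile (μ.map g) t
    obtain ⟨s, hys, hsq⟩ : ∃ s, y < g s ∧ s < q :=
      (((hgc.tendsto q).eventually (lt_mem_nhds hlt)).filter_mono nhdsWithin_le_nhds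
        |>.and (self_mem_nhdsWithin (s := Iio q))).exists
    have hpre : g ⁻¹' Iic y ⊆ Iic s := fun x hx => le_of_not_gt fun hsx =>
      (hys.trans_le (hgm hsx.le)).not_ge hx
    have hts : t ≤ cdf μ s := calc
      t ≤ cdf (μ.map g) y := le_cdf_quantile _ ht
      _ = μ.real (g ⁻¹' Iic y) := hcdf y
      _ ≤ μ.real (Iic s) := measureReal_mono hpre
      _ = cdf μ s := (cdf_eq_real μ s).symm
    exact hsq.not_ge ((quantile_le_iff μ ht).2 hts)

/-- Quantiles are additive for comonotone random variables: if `Y = g(X)` for a continuous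
nondecreasing `g`, then the quantile of `X + Y` is the sum of the quantiles, i.e. the
pooling effect is zero. -/
theorem quantile_add_comonotone {Ω : Type*} [MeasurableSpace Ω]
    (P : Measure Ω) [IsProbabilityMeasure P] (X : Ω → ℝ) (hX : Measurable X)
    (g : ℝ → ℝ) (hgc : Continuous g) (hgm : Monotone g)
    (t : ℝ) (ht : t ∈ Set.Ioo (0 : ℝ) 1) :
    quantile (Measure.map (fun ω => X ω + g (X ω)) P) t =
      quantile (Measure.map X P) t + quantile (Measure.map (fun ω => g (X ω)) P) t := by
  have := Measure.isProbabilityMeasure_map (μ := P) hX.aemeasurable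
  have hmap : ∀ f : ℝ → ℝ, Continuous f → P.map (fun ω => f (X ω)) = (P.map X).map f :=
    fun f hf => (Measure.map_map hf.measurable hX).symm
  have hadd : Continuous fun x => x + g x := continuous_id.add hgc
  rw [hmap _ hadd, hmap g hgc, quantile_map_of_monotone _ hadd (monotone_id.add hgm) ht,
    quantile_map_of_monotone _ hgc hgm ht]
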